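/- arXiv:2412.15367 — 3 statements merged into one kernel-verified Lean document; each statement's English description precedes it below -/
import Mathlib

section
/- Let w be a Gauss code on n ≥ 1 crossings and let S be a nonempty cut set such that, within every arc determined by S, every over position occurs (in arc order) before every under position. Then there exists a valid over-first schedule for (w, S). -/
/-- A Gauss code on `n` crossings: each crossing `c` has exactly one over
position (value `(c, true)`) and exactly one under position (value `(c, false)`). -/
def IsGaussCode {n : ℕ} (w : ZMod (2*n) → Fin n × Bool) : Prop :=
  ∀ (c : Fin n) (b : Bool), ∃! i, w i = (c, b)

/-- The cyclic distance from the start of the arc (w.r.t. the cut set `S`)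
containing `p` back to `p`: the least `d` with `p - d ∈ S`. -/
noncomputable def arcDist {m : ℕ} (S : Set (ZMod m)) (p : ZMod m) : ℕ :=
  sInf {d : ℕ | p - (d : ZMod m) ∈ S}

/-- The start of the arc containing `p`, for the cut set `S`. -/
noncomputable def arcStart {m : ℕ} (S : Set (ZMod m)) (p : ZMod m) : ZMod m :=
  p - (arcDist S p : ZMod m)

/-- A valid over-first schedule for `(w, S)`: a bijection `τ` assigning times,
increasing along each arc in arc order, giving every crossing's over position
a smaller time than its under position. -/
def ValidOverFirst {n : ℕ} (w : ZMod (2*n) → Fin n × Bool)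
    (S : Set (ZMod (2*n))) (τ : ZMod (2*n) ≃ Fin (2*n)) : Prop :=
  (∀ p q, arcStart S p = arcStart S q → arcDist S p < arcDist S q →
      (τ p : ℕ) < (τ q : ℕ)) ∧
  ∀ (c : Fin n) (p q), w p = (c, true) → w q = (c, false) → (τ p : ℕ) < (τ q : ℕ)

/-- A valid under-first schedule: increasing along arcs, every crossing's over
position gets a *later* time than its under position. -/
def ValidUnderFirst {n : ℕ} (w : ZMod (2*n) → Fin n × Bool)
    (S : Set (ZMod (2*n))) (τ : ZMod (2*n) ≃ Fin (2*n)) : Prop :=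
  (∀ p q, arcStart S p = arcStart S q → arcDist S p < arcDist S q →
      (τ p : ℕ) < (τ q : ℕ)) ∧
  ∀ (c : Fin n) (p q), w p = (c, true) → w q = (c, false) → (τ q : ℕ) < (τ p : ℕ)

/-- The over-first danceability number of `w`: least cardinality of a nonempty
cut set admitting a valid over-first schedule. -/
noncomputable def overDanceNum {n : ℕ} (w : ZMod (2*n) → Fin n × Bool) : ℕ :=
  sInf {k | ∃ S : Set (ZMod (2*n)), S.Nonempty ∧ Nat.card S = k ∧
    ∃ τ, ValidOverFirst w S τ}

/-- The under-first danceability number of `w`. -/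
noncomputable def underDanceNum {n : ℕ} (w : ZMod (2*n) → Fin n × Bool) : ℕ :=
  sInf {k | ∃ S : Set (ZMod (2*n)), S.Nonempty ∧ Nat.card S = k ∧
    ∃ τ, ValidUnderFirst w S τ}

/-- The set of bridge starts of `w`. -/
def BridgeStarts {n : ℕ} (w : ZMod (2*n) → Fin n × Bool) : Set (ZMod (2*n)) :=
  {p | (w p).2 = true ∧ (w (p - 1)).2 = false}

/-- The reversal of a Gauss code. -/
def revCode {n : ℕ} (w : ZMod (2*n) → Fin n × Bool) :
    ZMod (2*n) → Fin n × Bool :=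
  fun i => w (-(i + 1))


/-!
Schedule every over position before every under position, and within each of these two classes
go arc by arc, in arc order; this is sorting the positions by the lexicographic key
(is under, arc start, distance from the arc start). The only arc constraint such a schedule can
break is an under position preceding an over position of the same arc, which the hypothesis
rules out.
-/

open Function

theorem exists_equiv_fin_strictMono_of_injective {α β : Type*} [Fintype α] [LinearOrder β]
    {f : α → β} (hf : Injective f) {k : ℕ} (hk : Fintype.card α = k) :
    ∃ e : α ≃ Fin k, ∀ a b, f a < f b → e a < e b := by
  let : LinearOrder α := LinearOrder.lift' f hf
  exact ⟨(Fintype.orderIsoFinOfCardEq α hk).symm.toEquiv,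
    fun _ _ h => (Fintype.orderIsoFinOfCardEq α hk).symm.strictMono h⟩

theorem arcStart_add_arcDist {m : ℕ} (S : Set (ZMod m)) (p : ZMod m) :
    arcStart S p + arcDist S p = p :=
  sub_add_cancel p _

noncomputable def overFirstKey {m : ℕ} {α : Type*} (w : ZMod m → α × Bool)
    (S : Set (ZMod m)) (p : ZMod m) : Bool ×ₗ ℕ ×ₗ ℕ :=
  toLex (!(w p).2, toLex ((arcStart S p).val, arcDist S p))

theorem overFirstKey_injective {m : ℕ} [NeZero m] {α : Type*} (w : ZMod m → α × Bool)
    (S : Set (ZMod m)) : Injective (overFirstKey w S) := by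
  intro p q h
  simp only [overFirstKey, toLex_inj, Prod.mk.injEq] at h
  obtain ⟨-, hstart, hdist⟩ := h
  rw [← arcStart_add_arcDist S p, ← arcStart_add_arcDist S q, ZMod.val_injective m hstart, hdist]

theorem overFirstKey_lt_of_over_of_under {m : ℕ} {α : Type*} {w : ZMod m → α × Bool}
    (S : Set (ZMod m)) {p q : ZMod m} (hp : (w p).2 = true) (hq : (w q).2 = false) :
    overFirstKey w S p < overFirstKey w S q :=
  Prod.Lex.toLex_lt_toLex.2 (Or.inl (by simp [hp, hq]))

theorem overFirstKey_lt_of_arcDist_lt {m : ℕ} {α : Type*} {w : ZMod m → α × Bool}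
    {S : Set (ZMod m)} {p q : ZMod m} (hstart : arcStart S p = arcStart S q)
    (hdist : arcDist S p < arcDist S q) (hpq : ¬((w p).2 = false ∧ (w q).2 = true)) :
    overFirstKey w S p < overFirstKey w S q := by
  refine Prod.Lex.toLex_lt_toLex'.2 ⟨?_, fun _ => Prod.Lex.toLex_lt_toLex.2 (Or.inr ⟨?_, hdist⟩)⟩
  · cases hp : (w p).2 <;> cases hq : (w q).2 <;> simp_all
  · rw [hstart]

theorem exists_over_first_schedule_of_arcs_over_before_under_general
    (n : ℕ) (hn : 1 ≤ n) (w : ZMod (2*n) → Fin n × Bool)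
    (S : Set (ZMod (2*n)))
    (harc : ∀ p q : ZMod (2*n), (w p).2 = true → (w q).2 = false →
      arcStart S p = arcStart S q → arcDist S p < arcDist S q) :
    ∃ τ : ZMod (2*n) ≃ Fin (2*n), ValidOverFirst w S τ := by
  have : NeZero (2*n) := ⟨by omega⟩
  obtain ⟨τ, hτ⟩ :=
    exists_equiv_fin_strictMono_of_injective (overFirstKey_injective w S) (ZMod.card (2*n))
  refine ⟨τ, fun p q hstart hdist => hτ p q (overFirstKey_lt_of_arcDist_lt hstart hdist ?_),
    fun c p q hp hq => hτ p q (overFirstKey_lt_of_over_of_under S (by rw [hp]) (by rw [hq]))⟩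
  rintro ⟨hp, hq⟩
  exact (harc q p hq hp hstart.symm).asymm hdist

/-- If, within every arc of the cut set `S`, every over position occurs before
every under position, then `(w, S)` admits a valid over-first schedule. -/
theorem exists_over_first_schedule_of_arcs_over_before_under
    (n : ℕ) (hn : 1 ≤ n) (w : ZMod (2*n) → Fin n × Bool) (hw : IsGaussCode w)
    (S : Set (ZMod (2*n))) (hS : S.Nonempty)
    (harc : ∀ p q : ZMod (2*n), (w p).2 = true → (w q).2 = false →
      arcStart S p = arcStart S q → arcDist S p < arcDist S q) :
    ∃ τ : ZMod (2*n) ≃ Fin (2*n), ValidOverFirst w S τ :=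
  exists_over_first_schedule_of_arcs_over_before_under_general n hn w S harc
end

section
/- Let w be a Gauss code on n ≥ 1 crossings, let rev w be its reversal defined by (rev w) i = w (-(i+1)), and let S ⊆ ZMod (2n) be a nonempty cut set. Then (w, S) admats a valid over-first schedule if and only if (rev w, S') admits a valid under-first schedule, where S' = { -s : s ∈ S }. In particular, for every k ≥ 1, w admits an over-first configuration with k dancers iff rev w admits an under-first configuration with k dancers, so the over-first danceability number of w equals the under-first danceability number of rev w. (The retrograde trick.) -/
section RetroAux

variable {m : ℕ} [NeZero m]

lemma arcDist_setNonempty (S : Set (ZMod m)) (hS : S.Nonempty) (p : ZMod m) :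
    {d : ℕ | p - (d : ZMod m) ∈ S}.Nonempty := by
  obtain ⟨s, hs⟩ := hS
  refine ⟨(p - s).val, ?_⟩
  simp only [Set.mem_setOf_eq, ZMod.natCast_val, ZMod.cast_id, sub_sub_cancel]
  exact hs

lemma arcStart_mem (S : Set (ZMod m)) (hS : S.Nonempty) (p : ZMod m) :
    arcStart S p ∈ S :=
  Nat.sInf_mem (arcDist_setNonempty S hS p)

lemma arcDist_notMem (S : Set (ZMod m)) {p : ZMod m} {d : ℕ}
    (h : d < arcDist S p) : p - (d : ZMod m) ∉ S :=
  Nat.notMem_of_lt_sInf h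

lemma negneg_image (T : Set (ZMod m)) :
    (fun s => -s) '' ((fun s => -s) '' T) = T := by
  simp [Set.image_image]

lemma retro_key (S : Set (ZMod m)) (hS : S.Nonempty) (p q : ZMod m)
    (h1 : arcStart ((fun s => -s) '' S) p = arcStart ((fun s => -s) '' S) q)
    (h2 : arcDist ((fun s => -s) '' S) p < arcDist ((fun s => -s) '' S) q) :
    arcStart S (-(q + 1)) = arcStart S (-(p + 1)) ∧
    arcDist S (-(q + 1)) < arcDist S (-(p + 1)) := by
  set N := (fun s => -s) '' S with hN
  have hNne : N.Nonempty := hS.image _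
  set Dp := arcDist N p with hDp
  set Dq := arcDist N q with hDq
  set E := arcDist S (-(q + 1)) with hE
  have hA : p - (Dp : ZMod m) = q - (Dq : ZMod m) := h1
  -- membership of the q-arc start
  have hEmem : -(q + 1) - (E : ZMod m) ∈ S :=
    arcStart_mem S hS (-(q + 1))
  -- non-membership along the arc of N containing q
  have hqnot : ∀ d : ℕ, d < Dq → -q + (d : ZMod m) ∉ S := by
    intro d hd hmem
    have : q - (d : ZMod m) ∈ N := ⟨-q + (d : ZMod m), hmem, by ring⟩
    exact arcDist_notMem N hd this
  -- the crucial shift identity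
  have hshift : -(p + 1) - ((E + (Dq - Dp) : ℕ) : ZMod m)
      = -(q + 1) - (E : ZMod m) := by
    push_cast [Nat.cast_sub h2.le]
    linear_combination -hA
  have hle : arcDist S (-(p + 1)) ≤ E + (Dq - Dp) := by
    apply Nat.sInf_le
    show -(p + 1) - ((E + (Dq - Dp) : ℕ) : ZMod m) ∈ S
    rw [hshift]; exact hEmem
  have hge : E + (Dq - Dp) ≤ arcDist S (-(p + 1)) := by
    apply le_csInf (arcDist_setNonempty S hS _)
    intro x hx
    by_contra hcon
    push_neg at hcon
    rcases lt_or_ge x (Dq - Dp) with hx1 | hx1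
    · -- x < Dq - Dp : contradicts hqnot
      have hsum : Dp + 1 + x ≤ Dq := by omega
      have hd : Dq - (Dp + 1 + x) < Dq := by omega
      apply hqnot (Dq - (Dp + 1 + x)) hd
      have hcast : -q + ((Dq - (Dp + 1 + x) : ℕ) : ZMod m)
          = -(p + 1) - (x : ZMod m) := by
        push_cast [Nat.cast_sub hsum]
        linear_combination hA
      rw [hcast]; exact hx
    · -- Dq - Dp ≤ x < E + (Dq - Dp) : contradicts minimality of E
      have hy : x - (Dq - Dp) < E := by omega
      apply arcDist_notMem S hy
      have hcast : -(q + 1) - ((x - (Dq - Dp) : ℕ) : ZMod m)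
          = -(p + 1) - (x : ZMod m) := by
        push_cast [Nat.cast_sub hx1, Nat.cast_sub h2.le]
        linear_combination hA
      rw [hcast]; exact hx
  have hEq : arcDist S (-(p + 1)) = E + (Dq - Dp) := le_antisymm hle hge
  constructor
  · show -(q + 1) - (E : ZMod m) = -(p + 1) - ((arcDist S (-(p+1)) : ℕ) : ZMod m)
    rw [hEq, hshift]
  · omega

end RetroAux

lemma retro_main_iff {n : ℕ} (hn : 1 ≤ n) (w : ZMod (2*n) → Fin n × Bool)
    (S : Set (ZMod (2*n))) (hS : S.Nonempty) :
    (∃ τ : ZMod (2*n) ≃ Fin (2*n), ValidOverFirst w S τ) ↔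
    (∃ τ : ZMod (2*n) ≃ Fin (2*n),
      ValidUnderFirst (revCode w) ((fun s => -s) '' S) τ) := by
  haveI : NeZero (2*n) := ⟨by omega⟩
  constructor
  · rintro ⟨τ, hτ⟩
    refine ⟨⟨fun i => (τ (-(i+1))).rev, fun j => -(τ.symm j.rev + 1),
      fun i => by simp only [Fin.rev_rev, Equiv.symm_apply_apply]; ring,
      fun j => by
        have h : -(-(τ.symm j.rev + 1) + 1) = τ.symm j.rev := by ring
        simp only [h, Equiv.apply_symm_apply, Fin.rev_rev]⟩, ?_, ?_⟩
    · intro p q h1 h2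
      have hkey := retro_key S hS p q h1 h2
      have hlt := hτ.1 _ _ hkey.1 hkey.2
      simp only [Equiv.coe_fn_mk, Fin.val_rev]
      have h1p := (τ (-(p+1))).isLt
      omega
    · intro c p q hp hq
      have hp' : w (-(p+1)) = (c, true) := hp
      have hq' : w (-(q+1)) = (c, false) := hq
      have hlt := hτ.2 c _ _ hp' hq'
      simp only [Equiv.coe_fn_mk, Fin.val_rev]
      have h1p := (τ (-(p+1))).isLt
      omega
  · rintro ⟨τ, hτ⟩
    have hNN : (fun s => -s) '' ((fun s => -s) '' S) = S := negneg_image S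
    refine ⟨⟨fun i => (τ (-(i+1))).rev, fun j => -(τ.symm j.rev + 1),
      fun i => by simp only [Fin.rev_rev, Equiv.symm_apply_apply]; ring,
      fun j => by
        have h : -(-(τ.symm j.rev + 1) + 1) = τ.symm j.rev := by ring
        simp only [h, Equiv.apply_symm_apply, Fin.rev_rev]⟩, ?_, ?_⟩
    · intro p q h1 h2
      have hkey := retro_key ((fun s => -s) '' S) (hS.image _) p q
        (by rw [hNN]; exact h1) (by rw [hNN]; exact h2)
      have hlt := hτ.1 _ _ hkey.1 hkey.2
      simp only [Equiv.coe_fn_mk, Fin.val_rev]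
      have h1p := (τ (-(p+1))).isLt
      omega
    · intro c p q hp hq
      have e1 : -(-(p+1) + 1) = p := by ring
      have e2 : -(-(q+1) + 1) = q := by ring
      have hp' : revCode w (-(p+1)) = (c, true) := by
        show w (-(-(p+1) + 1)) = (c, true); rw [e1]; exact hp
      have hq' : revCode w (-(q+1)) = (c, false) := by
        show w (-(-(q+1) + 1)) = (c, false); rw [e2]; exact hq
      have hlt := hτ.2 c _ _ hp' hq'
      simp only [Equiv.coe_fn_mk, Fin.val_rev]
      have h1q := (τ (-(q+1))).isLt
      omega

/-- The retrograde trick: `(w, S)` admits a valid over-first schedule iff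
`(rev w, -S)` admits a valid under-first schedule; hence `k`-dancer over-first
configurations of `w` correspond to `k`-dancer under-first configurations of
`rev w`, and the two danceability numbers agree. -/
theorem retrograde_trick
    (n : ℕ) (hn : 1 ≤ n) (w : ZMod (2*n) → Fin n × Bool) (hw : IsGaussCode w)
    (S : Set (ZMod (2*n))) (hS : S.Nonempty) :
    ((∃ τ : ZMod (2*n) ≃ Fin (2*n), ValidOverFirst w S τ) ↔
      (∃ τ : ZMod (2*n) ≃ Fin (2*n),
        ValidUnderFirst (revCode w) ((fun s => -s) '' S) τ)) ∧
    (∀ k : ℕ, 1 ≤ k →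
      ((∃ T : Set (ZMod (2*n)), T.Nonempty ∧ Nat.card T = k ∧
          ∃ τ : ZMod (2*n) ≃ Fin (2*n), ValidOverFirst w T τ) ↔
        (∃ T : Set (ZMod (2*n)), T.Nonempty ∧ Nat.card T = k ∧
          ∃ τ : ZMod (2*n) ≃ Fin (2*n), ValidUnderFirst (revCode w) T τ))) ∧
    overDanceNum w = underDanceNum (revCode w) := by
  haveI : NeZero (2*n) := ⟨by omega⟩
  have hmain := fun (T : Set (ZMod (2*n))) (hT : T.Nonempty) =>
    retro_main_iff hn w T hT
  have hK : ∀ k : ℕ,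
      ((∃ T : Set (ZMod (2*n)), T.Nonempty ∧ Nat.card T = k ∧
          ∃ τ : ZMod (2*n) ≃ Fin (2*n), ValidOverFirst w T τ) ↔
        (∃ T : Set (ZMod (2*n)), T.Nonempty ∧ Nat.card T = k ∧
          ∃ τ : ZMod (2*n) ≃ Fin (2*n), ValidUnderFirst (revCode w) T τ)) := by
    intro k
    constructor
    · rintro ⟨T, hT, hk, τ, hτ⟩
      exact ⟨(fun s => -s) '' T, hT.image _,
        by rw [Nat.card_image_of_injective neg_injective]; exact hk,
        (hmain T hT).1 ⟨τ, hτ⟩⟩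
    · rintro ⟨T, hT, hk, τ, hτ⟩
      refine ⟨(fun s => -s) '' T, hT.image _,
        by rw [Nat.card_image_of_injective neg_injective]; exact hk, ?_⟩
      exact (hmain ((fun s => -s) '' T) (hT.image _)).2
        (by rw [negneg_image T]; exact ⟨τ, hτ⟩)
  refine ⟨hmain S hS, fun k _ => hK k, ?_⟩
  unfold overDanceNum underDanceNum
  congr 1
  ext k
  exact hK k
end

section
/- Let w : ZMod 4 → Fin 2 × Bool be the cyclic word with values (0,false), (0,true), (1,false), (1,true) at positions 0,1,2,3. Then the under-first danceability number of w is 1, while the over-first danceability number of w is 2. (Thus for a fixed oriented diagram, the under-first and over-first danceability numbers can differ.) -/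
/-! Ordered from the cut `0`, the word reads under, over, under, over, so the single arc with
its own order is an under-first schedule. For over-first, a single cut `s` makes every
`p ≠ s` come after `p - 1` on the only arc; as both over positions `1` and `3` directly
follow their own under positions, `s` would have to be both `1` and `3`. Cutting at `{1, 3}`
instead starts each of the two arcs at an over position. -/

/-- The arc condition shared by `ValidOverFirst` and `ValidUnderFirst`. -/
def IncreasingAlongArcs {m : ℕ} (S : Set (ZMod m)) (τ : ZMod m ≃ Fin m) : Prop :=
  ∀ p q, arcStart S p = arcStart S q → arcDist S p < arcDist S q → (τ p : ℕ) < (τ q : ℕ)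

section Arcs

variable {m : ℕ} {S : Set (ZMod m)} {p : ZMod m}

lemma arcDist_eq_zero_of_mem (h : p ∈ S) : arcDist S p = 0 :=
  Nat.sInf_eq_zero.mpr (Or.inl (by simpa using h))

lemma arcDist_eq_one_of_not_mem (h : p ∉ S) (h' : p - 1 ∈ S) : arcDist S p = 1 := by
  have h₁ : 1 ∈ {d : ℕ | p - (d : ZMod m) ∈ S} := by simpa using h'
  have hne : arcDist S p ≠ 0 := fun h₀ => h (by
    have h₀' : p - (arcDist S p : ZMod m) ∈ S := Nat.sInf_mem ⟨1, h₁⟩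
    simpa [h₀] using h₀')
  have hle : arcDist S p ≤ 1 := Nat.sInf_le h₁
  omega

lemma arcStart_eq_self_of_mem (h : p ∈ S) : arcStart S p = p := by
  simp [arcStart, arcDist_eq_zero_of_mem h]

lemma arcStart_eq_sub_one_of_not_mem (h : p ∉ S) (h' : p - 1 ∈ S) : arcStart S p = p - 1 := by
  simp [arcStart, arcDist_eq_one_of_not_mem h h']

lemma increasingAlongArcs_of_forall_mem_or_sub_one_mem {τ : ZMod m ≃ Fin m}
    (hS : ∀ p, p ∈ S ∨ p - 1 ∈ S) (hτ : ∀ p ∉ S, (τ (p - 1) : ℕ) < τ p) :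
    IncreasingAlongArcs S τ := by
  intro p q hstart hlt
  have hq : q ∉ S := fun hq => by simp [arcDist_eq_zero_of_mem hq] at hlt
  have hq' : q - 1 ∈ S := (hS q).resolve_left hq
  have hp : p ∈ S := by
    by_contra hp
    rw [arcDist_eq_one_of_not_mem hp ((hS p).resolve_left hp),
      arcDist_eq_one_of_not_mem hq hq'] at hlt
    exact lt_irrefl 1 hlt
  rw [arcStart_eq_self_of_mem hp, arcStart_eq_sub_one_of_not_mem hq hq'] at hstart
  exact hstart ▸ hτ q hq

end Arcs

section SingleCut

variable {m : ℕ} [NeZero m]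

lemma ZMod.val_sub_one_lt {x : ZMod m} (hx : x ≠ 0) : (x - 1).val < x.val := by
  have : Fact (1 < m) :=
    ⟨lt_of_le_of_ne NeZero.one_le (ZMod.nontrivial_iff.mp ⟨⟨x, 0, hx⟩⟩).symm⟩
  have hpos : 0 < x.val := (ZMod.val_pos).mpr hx
  rw [ZMod.val_sub (by rw [ZMod.val_one]; omega), ZMod.val_one]
  omega

lemma arcDist_singleton (s p : ZMod m) : arcDist {s} p = (p - s).val := by
  have hmem : p - ((p - s).val : ZMod m) ∈ ({s} : Set (ZMod m)) := by simp
  refine le_antisymm (Nat.sInf_le hmem) (le_csInf ⟨_, hmem⟩ ?_)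
  intro d hd
  have hd : (d : ZMod m) = p - s := by
    have : p - (d : ZMod m) = s := hd
    linear_combination -this
  rw [← hd, ZMod.val_natCast]
  exact Nat.mod_le d m

lemma arcStart_singleton (s p : ZMod m) : arcStart {s} p = s := by
  simp [arcStart, arcDist_singleton]

lemma increasingAlongArcs_singleton_iff {s : ZMod m} {τ : ZMod m ≃ Fin m} :
    IncreasingAlongArcs {s} τ ↔ ∀ p q, (p - s).val < (q - s).val → (τ p : ℕ) < τ q := by
  simp [IncreasingAlongArcs, arcStart_singleton, arcDist_singleton]

end SingleCut

lemma ValidOverFirst.eq_of_singleton {n : ℕ} [NeZero n] {w : ZMod (2*n) → Fin n × Bool}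
    {s : ZMod (2*n)} {τ : ZMod (2*n) ≃ Fin (2*n)} (hτ : ValidOverFirst w {s} τ)
    {c : Fin n} {p : ZMod (2*n)} (hover : w p = (c, true)) (hunder : w (p - 1) = (c, false)) :
    p = s := by
  by_contra hps
  have harc := increasingAlongArcs_singleton_iff.mp hτ.1 (p - 1) p
    (by simpa only [sub_right_comm] using ZMod.val_sub_one_lt (sub_ne_zero.mpr hps))
  have hcross := hτ.2 c p (p - 1) hover hunder
  omega

def exampleCode : ZMod (2*2) → Fin 2 × Bool := ![(0, false), (0, true), (1, false), (1, true)]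

lemma underDanceNum_exampleCode : underDanceNum exampleCode = 1 := by
  let τ : ZMod (2*2) ≃ Fin (2*2) := Equiv.refl (Fin 4)
  have hτ : ValidUnderFirst exampleCode {0} τ :=
    ⟨increasingAlongArcs_singleton_iff.mpr (by decide), by decide⟩
  refine IsLeast.csInf_eq ⟨⟨{0}, Set.singleton_nonempty 0, by simp, τ, hτ⟩, ?_⟩
  rintro _ ⟨S, hS, rfl, -⟩
  have := hS.to_subtype
  exact Nat.card_pos

lemma overDanceNum_exampleCode : overDanceNum exampleCode = 2 := by
  let τ : ZMod (2*2) ≃ Fin (2*2) :=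
    ⟨![3, 0, 2, 1], ![1, 3, 2, 0], fun p => by fin_cases p <;> rfl, fun t => by fin_cases t <;> rfl⟩
  have hτ : ValidOverFirst exampleCode {1, 3} τ :=
    ⟨increasingAlongArcs_of_forall_mem_or_sub_one_mem (by decide) (by decide), by decide⟩
  refine IsLeast.csInf_eq ⟨⟨{1, 3}, Set.insert_nonempty 1 {3},
    by rw [Nat.card_coe_set_eq, Set.ncard_pair (by decide)], τ, hτ⟩, ?_⟩
  rintro _ ⟨S, hS, rfl, σ, hσ⟩
  have := hS.to_subtype
  by_contra! hlt
  obtain ⟨s, rfl⟩ : ∃ s, S = {s} := by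
    rw [← Set.ncard_eq_one, ← Nat.card_coe_set_eq]
    have := Nat.card_pos (α := S)
    omega
  have h1 : (1 : ZMod (2*2)) = s := hσ.eq_of_singleton (c := 0) rfl rfl
  have h3 : (3 : ZMod (2*2)) = s := hσ.eq_of_singleton (c := 1) rfl rfl
  exact absurd (h1.trans h3.symm) (by decide)

/-- For the cyclic word (0,false),(0,true),(1,false),(1,true) on `ZMod 4`,
the under-first danceability number is 1 while the over-first danceability
number is 2. -/
theorem underDance_ne_overDance_example
    (w : ZMod (2*2) → Fin 2 × Bool)
    (h0 : w 0 = (0, false)) (h1 : w 1 = (0, true))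
    (h2 : w 2 = (1, false)) (h3 : w 3 = (1, true)) :
    underDanceNum w = 1 ∧ overDanceNum w = 2 := by
  obtain rfl : w = exampleCode := by
    funext p
    fin_cases p <;> assumption
  exact ⟨underDanceNum_exampleCode, overDanceNum_exampleCode⟩
end
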